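/- arXiv:2105.07536 — 3 statements merged into one kernel-verified Lean document; each statement's English description precedes it below -/
import Mathlib

section
/- Let P be an n×n symmetric nonnegative matrix, h > 0, α > 0, and H_n = (1/(n(n-1)))(1_n 1_n^T − I_n). If the operator norm ‖h·L(αP)‖ < 2, then 1 ≤ ‖I_n − h·L(αP − H_n)‖ ≤ 1 + h/(n-1). -/
open Matrix BigOperators

/-- The graph Laplacian L(A) = D(A) - A. -/
noncomputable def lap {n : ℕ} (A : Matrix (Fin n) (Fin n) ℝ) : Matrix (Fin n) (Fin n) ℝ :=
  Matrix.diagonal (fun j => ∑ i, A i j) - A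

/-- The centering matrix H_n = (1/(n(n-1)))(1 1ᵀ − I). -/
noncomputable def Hmat (n : ℕ) : Matrix (Fin n) (Fin n) ℝ :=
  (((n : ℝ) * ((n : ℝ) - 1))⁻¹) • (Matrix.of (fun _ _ => (1 : ℝ)) - 1)

/-- Spectral (ℓ²-operator) norm of a matrix. -/
noncomputable def specNorm {m n : ℕ} (A : Matrix (Fin m) (Fin n) ℝ) : ℝ :=
  ‖LinearMap.toContinuousLinearMap
    (Matrix.toLin (EuclideanSpace.basisFun (Fin n) ℝ).toBasis
      (EuclideanSpace.basisFun (Fin m) ℝ).toBasis A)‖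

/-!
The iteration matrix splits as `(I - h L(αP)) + h L(Hₙ)`, where
`L(Hₙ) = (n - 1)⁻¹ (I - 11ᵀ/n)` is positive semidefinite with quadratic form at most
`(n - 1)⁻¹ ‖x‖²`, hence of norm at most `(n - 1)⁻¹`. The Laplacian `T = h L(αP)` of a symmetric
nonnegative matrix is positive semidefinite, so `‖T‖ ≤ 2` puts the quadratic form of the
self-adjoint `I - T` in `[-‖x‖², ‖x‖²]`, whence `‖I - T‖ ≤ 1`; the triangle inequality gives the
upper bound. For the lower bound, the Laplacian of a symmetric matrix kills the constant vector,
which is therefore fixed by `I - h L(αP - Hₙ)`.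
-/

namespace ContinuousLinearMap

variable {𝕜 E : Type*} [RCLike 𝕜] [NormedAddCommGroup E] [InnerProductSpace 𝕜 E]
open RCLike

theorem norm_le_of_abs_re_inner_self_le {T : E →L[𝕜] E} (hT : T.IsSymmetric) {C : ℝ}
    (hC : 0 ≤ C) (h : ∀ x, |re (inner 𝕜 (T x) x)| ≤ C * ‖x‖ ^ 2) : ‖T‖ ≤ C := by
  rw [T.norm_eq_iSup_rayleighQuotient hT]
  refine ciSup_le fun x => ?_
  rcases eq_or_ne x 0 with rfl | hx
  · simpa using hC
  rw [rayleighQuotient, reApplyInnerSelf_apply, abs_div, abs_sq, div_le_iff₀ (by positivity)]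
  exact h x

theorem IsPositive.norm_le_of_re_inner_self_le {T : E →L[𝕜] E} (hT : T.IsPositive) {C : ℝ}
    (hC : 0 ≤ C) (h : ∀ x, re (inner 𝕜 (T x) x) ≤ C * ‖x‖ ^ 2) : ‖T‖ ≤ C :=
  norm_le_of_abs_re_inner_self_le hT.isSymmetric hC fun x =>
    abs_le.2 ⟨(neg_nonpos.2 (by positivity)).trans (hT.re_inner_nonneg_left x), h x⟩

theorem re_inner_self_le_norm_mul_sq (T : E →L[𝕜] E) (x : E) :
    re (inner 𝕜 (T x) x) ≤ ‖T‖ * ‖x‖ ^ 2 := by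
  grw [re_le_norm, norm_inner_le_norm, le_opNorm, mul_assoc, ← sq]

theorem IsPositive.norm_one_sub_le_one {T : E →L[𝕜] E} (hT : T.IsPositive) (h : ‖T‖ ≤ 2) :
    ‖1 - T‖ ≤ 1 := by
  have hsymm : (1 - T).IsSymmetric := LinearMap.IsSymmetric.id.sub hT.isSymmetric
  refine norm_le_of_abs_re_inner_self_le hsymm zero_le_one fun x => ?_
  have hle : re (inner 𝕜 (T x) x) ≤ 2 * ‖x‖ ^ 2 := by
    grw [re_inner_self_le_norm_mul_sq, h]
  have hnonneg := hT.re_inner_nonneg_left x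
  rw [_root_.sub_apply, one_apply_eq_self, inner_sub_left, map_sub,
    inner_self_eq_norm_sq, abs_le]
  constructor <;> linarith

theorem one_le_norm_of_apply_eq_self {T : E →L[𝕜] E} {x : E} (hx : x ≠ 0) (hTx : T x = x) :
    1 ≤ ‖T‖ := by
  have := T.le_opNorm x
  rw [hTx] at this
  exact (le_mul_iff_one_le_left (norm_pos_iff.2 hx)).1 this

end ContinuousLinearMap

open scoped ComplexOrder in
theorem Matrix.PosSemidef.isPositive_toEuclideanCLM {𝕜 ι : Type*} [RCLike 𝕜] [Fintype ι]
    [DecidableEq ι] {A : Matrix ι ι 𝕜} (hA : A.PosSemidef) :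
    (toEuclideanCLM (𝕜 := 𝕜) A).IsPositive :=
  Matrix.isPositive_toEuclideanLin_iff.2 hA

section Laplacian

variable {n : ℕ}

theorem lap_sub (A B : Matrix (Fin n) (Fin n) ℝ) : lap (A - B) = lap A - lap B := by
  ext i j
  simp only [lap, Matrix.sub_apply, diagonal_apply, Finset.sum_sub_distrib]
  split_ifs <;> ring

theorem isSymm_lap {A : Matrix (Fin n) (Fin n) ℝ} (hA : A.IsSymm) : (lap A).IsSymm :=
  (isSymm_diagonal _).sub hA

theorem lap_mulVec_apply (A : Matrix (Fin n) (Fin n) ℝ) (x : Fin n → ℝ) (i : Fin n) :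
    (lap A *ᵥ x) i = (∑ k, A k i) * x i - ∑ j, A i j * x j := by
  rw [lap, sub_mulVec, Pi.sub_apply, mulVec_diagonal]
  rfl

theorem lap_mulVec_one {A : Matrix (Fin n) (Fin n) ℝ} (hA : A.IsSymm) : lap A *ᵥ 1 = 0 := by
  ext i
  simp only [lap_mulVec_apply, Pi.one_apply, mul_one, Pi.zero_apply, sub_eq_zero]
  exact Finset.sum_congr rfl fun j _ => hA.apply i j

theorem two_mul_dotProduct_lap_mulVec {A : Matrix (Fin n) (Fin n) ℝ} (hA : A.IsSymm)
    (x : Fin n → ℝ) :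
    2 * (x ⬝ᵥ lap A *ᵥ x) = ∑ i, ∑ j, A i j * (x i - x j) ^ 2 := by
  have hform : x ⬝ᵥ lap A *ᵥ x = ∑ i, ∑ j, A i j * (x i ^ 2 - x i * x j) := by
    refine Finset.sum_congr rfl fun i _ => ?_
    rw [lap_mulVec_apply, Finset.sum_mul, mul_sub, Finset.mul_sum, Finset.mul_sum,
      ← Finset.sum_sub_distrib]
    refine Finset.sum_congr rfl fun j _ => ?_
    rw [hA.apply j i]
    ring
  have hswap : x ⬝ᵥ lap A *ᵥ x = ∑ i, ∑ j, A i j * (x j ^ 2 - x i * x j) := by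
    rw [hform, Finset.sum_comm]
    refine Finset.sum_congr rfl fun i _ => Finset.sum_congr rfl fun j _ => ?_
    rw [hA.apply j i]
    ring
  rw [two_mul]
  nth_rw 1 [hform]
  rw [hswap, ← Finset.sum_add_distrib]
  refine Finset.sum_congr rfl fun i _ => ?_
  rw [← Finset.sum_add_distrib]
  refine Finset.sum_congr rfl fun j _ => ?_
  ring

theorem posSemidef_lap {A : Matrix (Fin n) (Fin n) ℝ} (hA : A.IsSymm)
    (hA0 : ∀ i j, 0 ≤ A i j) : (lap A).PosSemidef := by
  refine posSemidef_iff_dotProduct_mulVec.2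
    ⟨isHermitian_iff_isSymm.2 (isSymm_lap hA), fun x => ?_⟩
  have hsum : 0 ≤ ∑ i, ∑ j, A i j * (x i - x j) ^ 2 :=
    Finset.sum_nonneg fun i _ => Finset.sum_nonneg fun j _ => mul_nonneg (hA0 i j) (sq_nonneg _)
  rw [star_trivial]
  linarith [two_mul_dotProduct_lap_mulVec hA x]

end Laplacian

section Centering

variable {n : ℕ}

theorem isSymm_Hmat : (Hmat n).IsSymm :=
  (IsSymm.ext fun _ _ => rfl : (of fun _ _ => (1 : ℝ) : Matrix (Fin n) (Fin n) ℝ).IsSymm).sub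
    isSymm_one |>.smul _

theorem Hmat_apply_nonneg (i j : Fin n) : 0 ≤ Hmat n i j := by
  have hc : 0 ≤ (n : ℝ) * ((n : ℝ) - 1) := by
    rcases Nat.eq_zero_or_pos n with rfl | hn
    · simp
    · exact mul_nonneg n.cast_nonneg (sub_nonneg.2 (Nat.one_le_cast.2 hn))
  simp only [Hmat, Matrix.smul_apply, Matrix.sub_apply, of_apply, one_apply, smul_eq_mul]
  exact mul_nonneg (inv_nonneg.2 hc) (by split_ifs <;> norm_num)

theorem sum_Hmat_apply (j : Fin n) :
    ∑ i, Hmat n i j = ((n : ℝ) * ((n : ℝ) - 1))⁻¹ * (n - 1) := by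
  simp [Hmat, ← Finset.mul_sum, Finset.sum_sub_distrib, one_apply]

theorem lap_Hmat :
    lap (Hmat n) = ((n : ℝ) * ((n : ℝ) - 1))⁻¹ • ((n : ℝ) • 1 - of fun _ _ => (1 : ℝ)) := by
  ext i j
  rw [lap, Matrix.sub_apply, diagonal_apply, sum_Hmat_apply]
  simp only [Hmat, Matrix.smul_apply, Matrix.sub_apply, one_apply, of_apply, smul_eq_mul]
  split_ifs <;> ring

theorem dotProduct_lap_Hmat_mulVec (x : Fin n → ℝ) :
    x ⬝ᵥ lap (Hmat n) *ᵥ x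
      = ((n : ℝ) * ((n : ℝ) - 1))⁻¹ * (n * (x ⬝ᵥ x) - (∑ i, x i) ^ 2) := by
  have hJ : x ⬝ᵥ (of fun _ _ => (1 : ℝ)) *ᵥ x = (∑ i, x i) ^ 2 := by
    simp [dotProduct, mulVec, ← Finset.sum_mul, sq]
  rw [lap_Hmat, smul_mulVec, dotProduct_smul, sub_mulVec, dotProduct_sub, smul_mulVec,
    one_mulVec, dotProduct_smul, hJ, smul_eq_mul, smul_eq_mul]

theorem re_inner_toEuclideanCLM_lap_Hmat_le (hn : n ≠ 0) (x : EuclideanSpace ℝ (Fin n)) :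
    RCLike.re (inner ℝ (toEuclideanCLM (𝕜 := ℝ) (lap (Hmat n)) x) x)
      ≤ ((n : ℝ) - 1)⁻¹ * ‖x‖ ^ 2 := by
  have hn1 : (1 : ℝ) ≤ n := Nat.one_le_cast.2 (Nat.one_le_iff_ne_zero.2 hn)
  have hnorm : ‖x‖ ^ 2 = x.ofLp ⬝ᵥ x.ofLp := by
    rw [EuclideanSpace.real_norm_sq_eq]
    simp only [dotProduct, sq]
  rw [RCLike.re_to_real, real_inner_comm, inner_toEuclideanCLM, dotProduct_lap_Hmat_mulVec,
    hnorm]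
  calc ((n : ℝ) * (n - 1))⁻¹ * (n * (x.ofLp ⬝ᵥ x.ofLp) - (∑ i, x i) ^ 2)
      ≤ ((n : ℝ) * (n - 1))⁻¹ * (n * (x.ofLp ⬝ᵥ x.ofLp)) :=
        mul_le_mul_of_nonneg_left (sub_le_self _ (sq_nonneg _))
          (inv_nonneg.2 (mul_nonneg n.cast_nonneg (sub_nonneg.2 hn1)))
    _ = ((n : ℝ) - 1)⁻¹ * (x.ofLp ⬝ᵥ x.ofLp) := by
      rw [mul_inv, mul_comm (n : ℝ)⁻¹, mul_assoc, inv_mul_cancel_left₀ (Nat.cast_ne_zero.2 hn)]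

theorem norm_toEuclideanCLM_lap_Hmat_le (hn : n ≠ 0) :
    ‖toEuclideanCLM (𝕜 := ℝ) (lap (Hmat n))‖ ≤ ((n : ℝ) - 1)⁻¹ := by
  have hn1 : (1 : ℝ) ≤ n := Nat.one_le_cast.2 (Nat.one_le_iff_ne_zero.2 hn)
  exact (posSemidef_lap isSymm_Hmat Hmat_apply_nonneg).isPositive_toEuclideanCLM
    |>.norm_le_of_re_inner_self_le (inv_nonneg.2 (sub_nonneg.2 hn1))
      (re_inner_toEuclideanCLM_lap_Hmat_le hn)

end Centering

theorem specNorm_eq_norm_toEuclideanCLM {n : ℕ} (A : Matrix (Fin n) (Fin n) ℝ) :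
    specNorm A = ‖toEuclideanCLM (𝕜 := ℝ) A‖ := rfl

/-- If ‖h·L(αP)‖ < 2, then 1 ≤ ‖I − h·L(αP − H_n)‖ ≤ 1 + h/(n-1). -/
theorem norm_iter_matrix_bounds {n : ℕ} (hn : 2 ≤ n)
    (P : Matrix (Fin n) (Fin n) ℝ) (hsym : P.IsSymm) (hnonneg : ∀ i j, 0 ≤ P i j)
    (α h : ℝ) (hα : 0 < α) (hh : 0 < h)
    (hnorm : specNorm (h • lap (α • P)) < 2) :
    1 ≤ specNorm ((1 : Matrix (Fin n) (Fin n) ℝ) - h • lap (α • P - Hmat n)) ∧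
    specNorm ((1 : Matrix (Fin n) (Fin n) ℝ) - h • lap (α • P - Hmat n))
      ≤ 1 + h / ((n : ℝ) - 1) := by
  have hn0 : n ≠ 0 := by omega
  have hαP : (α • P).IsSymm := hsym.smul α
  have hL : (toEuclideanCLM (𝕜 := ℝ) (h • lap (α • P))).IsPositive :=
    ((posSemidef_lap hαP fun i j => mul_nonneg hα.le (hnonneg i j)).smul hh.le
      ).isPositive_toEuclideanCLM
  have hsplit : (1 : Matrix (Fin n) (Fin n) ℝ) - h • lap (α • P - Hmat n)
      = (1 - h • lap (α • P)) + h • lap (Hmat n) := by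
    rw [lap_sub, smul_sub]
    abel
  rw [specNorm_eq_norm_toEuclideanCLM] at hnorm ⊢
  constructor
  · have hfix : toEuclideanCLM (𝕜 := ℝ) (1 - h • lap (α • P - Hmat n)) (WithLp.toLp 2 1)
        = WithLp.toLp 2 1 := by
      rw [toEuclideanCLM_toLp, sub_mulVec, one_mulVec, smul_mulVec,
        lap_mulVec_one (hαP.sub isSymm_Hmat), smul_zero, sub_zero]
    have : NeZero n := ⟨hn0⟩
    exact ContinuousLinearMap.one_le_norm_of_apply_eq_self (by simp) hfix
  · calc _ = ‖(1 - toEuclideanCLM (𝕜 := ℝ) (h • lap (α • P)))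
          + h • toEuclideanCLM (𝕜 := ℝ) (lap (Hmat n))‖ := by
          rw [hsplit, map_add, map_sub, map_one, map_smul toEuclideanCLM h (lap (Hmat n))]
      _ ≤ ‖1 - toEuclideanCLM (𝕜 := ℝ) (h • lap (α • P))‖
          + h * ‖toEuclideanCLM (𝕜 := ℝ) (lap (Hmat n))‖ := by
          grw [norm_add_le, norm_smul, Real.norm_of_nonneg hh.le]
      _ ≤ 1 + h * ((n : ℝ) - 1)⁻¹ := by
          gcongr
          exacts [hL.norm_one_sub_le_one hnorm.le, norm_toEuclideanCLM_lap_Hmat_le hn0]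
      _ = 1 + h / ((n : ℝ) - 1) := by rw [div_eq_mul_inv]
end

section
/- Let y_1,...,y_n ∈ R^2 and let q_{ij} = (1+‖y_i−y_j‖²)^{-1} / Z with Z = Σ_{ℓ≠s}(1+‖y_ℓ−y_s‖²)^{-1}. Let η = (diam{y_i})². Then for all i ≠ j, |q_{ij}/(1+‖y_i−y_j‖²) − 1/(n(n-1))| ≤ 2η/(n(n-1)(1−η)), provided η < 1. -/
/-!
Every kernel value `t = 1 + dsq y i j` lies in `[1, 1 + η]`, so `Z`, a sum of `n(n-1)` reciprocals
of such values, lies in `[n(n-1)/(1+η), n(n-1)]`. Hence `q_{ij}/t = 1/(t² Z)` lies between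
`1/(n(n-1)(1+η)²)` and `(1+η)/(n(n-1))`, and both endpoints are within `2η/(n(n-1)(1-η))`
of `1/(n(n-1))`.
-/

open BigOperators

/-- Squared Euclidean distance between the i-th and j-th embedding points in R². -/
noncomputable def dsq {n : ℕ} (y : Fin n → Fin 2 → ℝ) (i j : Fin n) : ℝ :=
  ∑ l, (y i l - y j l) ^ 2

/-- Normalizing constant Z = Σ_{ℓ≠s} (1 + ‖y_ℓ − y_s‖²)⁻¹. -/
noncomputable def Znorm {n : ℕ} (y : Fin n → Fin 2 → ℝ) : ℝ :=
  ∑ i, ∑ j, if i = j then 0 else (1 + dsq y i j)⁻¹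

/-- t-distributed similarity q_{ij} = (1 + ‖y_i − y_j‖²)⁻¹ / Z. -/
noncomputable def qsim {n : ℕ} (y : Fin n → Fin 2 → ℝ) (i j : Fin n) : ℝ :=
  (1 + dsq y i j)⁻¹ / Znorm y

open Finset

section OffDiagonal

variable {ι R : Type*} [Fintype ι] [DecidableEq ι] [Ring R]

theorem sum_sum_ite_eq_zero_const (c : R) :
    ∑ i : ι, ∑ j : ι, (if i = j then 0 else c) = Fintype.card ι * (Fintype.card ι - 1) * c := by
  have hrow : ∀ i : ι, ∑ j, (if i = j then 0 else c) = (Fintype.card ι - 1) * c := by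
    intro i
    rw [sum_ite, sum_const_zero, zero_add, filter_ne, sum_const, nsmul_eq_mul,
      cast_card_erase_of_mem (mem_univ i), card_univ]
  rw [sum_congr rfl fun i _ => hrow i, sum_const, card_univ, nsmul_eq_mul, mul_assoc]

variable [PartialOrder R] [IsOrderedRing R]

theorem sum_sum_ite_eq_zero_le {f : ι → ι → R} {c : R} (h : ∀ i j, i ≠ j → f i j ≤ c) :
    ∑ i, ∑ j, (if i = j then 0 else f i j) ≤ Fintype.card ι * (Fintype.card ι - 1) * c := by
  rw [← sum_sum_ite_eq_zero_const]
  gcongr with i _ j _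
  split_ifs with hij
  exacts [le_rfl, h i j hij]

theorem le_sum_sum_ite_eq_zero {f : ι → ι → R} {c : R} (h : ∀ i j, i ≠ j → c ≤ f i j) :
    Fintype.card ι * (Fintype.card ι - 1) * c ≤ ∑ i, ∑ j, (if i = j then 0 else f i j) := by
  rw [← sum_sum_ite_eq_zero_const]
  gcongr with i _ j _
  split_ifs with hij
  exacts [le_rfl, h i j hij]

end OffDiagonal

theorem dsq_nonneg {n : ℕ} (y : Fin n → Fin 2 → ℝ) (i j : Fin n) : 0 ≤ dsq y i j :=
  sum_nonneg fun _ _ => sq_nonneg _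

theorem dsq_le_iSup_iSup {n : ℕ} (y : Fin n → Fin 2 → ℝ) (i j : Fin n) :
    dsq y i j ≤ ⨆ k, ⨆ l, dsq y k l :=
  (le_ciSup (Set.finite_range _).bddAbove j).trans
    (le_ciSup (f := fun k => ⨆ l, dsq y k l) (Set.finite_range _).bddAbove i)

theorem Znorm_le {n : ℕ} (y : Fin n → Fin 2 → ℝ) : Znorm y ≤ n * (n - 1) := by
  simpa [Znorm] using sum_sum_ite_eq_zero_le (c := (1 : ℝ)) fun i j _ =>
    inv_le_one_of_one_le₀ (le_add_of_nonneg_right (dsq_nonneg y i j))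

theorem mul_inv_le_Znorm {n : ℕ} {y : Fin n → Fin 2 → ℝ} {η : ℝ} (hη : ∀ i j, dsq y i j ≤ η) :
    n * (n - 1) * (1 + η)⁻¹ ≤ Znorm y := by
  simpa [Znorm] using le_sum_sum_ite_eq_zero (c := (1 + η)⁻¹) fun i j _ =>
    inv_anti₀ (by linarith [dsq_nonneg y i j]) (add_le_add_right (hη i j) 1)

section Concentration

variable {N Z t η : ℝ}

theorem inv_div_div_sub_inv_le (hN : 0 < N) (hη : 0 ≤ η) (ht : 1 ≤ t) (hZ : N * (1 + η)⁻¹ ≤ Z) :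
    t⁻¹ / Z / t - N⁻¹ ≤ η / N := by
  have hZ0 : 0 < Z := lt_of_lt_of_le (by positivity) hZ
  have hZinv : Z⁻¹ ≤ (1 + η) / N := by
    simpa [div_eq_mul_inv] using inv_anti₀ (by positivity) hZ
  have ht0 : 0 ≤ t⁻¹ := inv_nonneg.mpr (zero_le_one.trans ht)
  have ht1 : t⁻¹ ≤ 1 := inv_le_one_of_one_le₀ ht
  calc t⁻¹ / Z / t - N⁻¹ = Z⁻¹ * (t⁻¹ * t⁻¹) - N⁻¹ := by ring
    _ ≤ (1 + η) / N * (1 * 1) - N⁻¹ := by gcongr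
    _ = η / N := by field_simp; ring

theorem inv_sub_inv_div_div_le (hN : 0 < N) (hη : 0 ≤ η) (ht : 1 ≤ t) (htη : t ≤ 1 + η)
    (hZ0 : 0 < Z) (hZ : Z ≤ N) :
    N⁻¹ - t⁻¹ / Z / t ≤ (2 * η + η ^ 2) / (N * (1 + η) ^ 2) := by
  have htinv : (1 + η)⁻¹ ≤ t⁻¹ := inv_anti₀ (zero_lt_one.trans_le ht) htη
  calc N⁻¹ - t⁻¹ / Z / t = N⁻¹ - Z⁻¹ * (t⁻¹ * t⁻¹) := by ring
    _ ≤ N⁻¹ - N⁻¹ * ((1 + η)⁻¹ * (1 + η)⁻¹) := by gcongr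
    _ = (2 * η + η ^ 2) / (N * (1 + η) ^ 2) := by field_simp; ring

theorem abs_inv_div_div_sub_inv_le (hN : 0 < N) (hη : 0 ≤ η) (hη1 : η < 1) (ht : 1 ≤ t)
    (htη : t ≤ 1 + η) (hZlo : N * (1 + η)⁻¹ ≤ Z) (hZhi : Z ≤ N) :
    |t⁻¹ / Z / t - N⁻¹| ≤ 2 * η / (N * (1 - η)) := by
  have h1η : 0 < 1 - η := by linarith
  have hZ0 : 0 < Z := lt_of_lt_of_le (by positivity) hZlo
  have hNη : 0 ≤ N * η * η := by positivity
  rw [abs_le]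
  constructor
  · have hlower : (2 * η + η ^ 2) / (N * (1 + η) ^ 2) ≤ 2 * η / (N * (1 - η)) := by
      rw [div_le_div_iff₀ (by positivity) (by positivity)]
      nlinarith [mul_nonneg hNη hη]
    linarith [inv_sub_inv_div_div_le hN hη ht htη hZ0 hZhi]
  · have hupper : η / N ≤ 2 * η / (N * (1 - η)) := by
      rw [div_le_div_iff₀ hN (by positivity)]
      nlinarith
    linarith [inv_div_div_sub_inv_le hN hη ht hZlo]

end Concentration

theorem qsim_concentration_general {n : ℕ} (y : Fin n → Fin 2 → ℝ)
    (η : ℝ) (hη : η = ⨆ i, ⨆ j, dsq y i j) (hη1 : η < 1) :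
    ∀ i j : Fin n, i ≠ j →
      |qsim y i j / (1 + dsq y i j) - ((n : ℝ) * ((n : ℝ) - 1))⁻¹|
        ≤ 2 * η / ((n : ℝ) * ((n : ℝ) - 1) * (1 - η)) := by
  intro i j hij
  have hn : (2 : ℝ) ≤ n := by
    exact_mod_cast Fin.nontrivial_iff_two_le.mp (nontrivial_of_ne i j hij)
  have hdη : ∀ k l, dsq y k l ≤ η := hη ▸ dsq_le_iSup_iSup y
  exact abs_inv_div_div_sub_inv_le (by nlinarith) ((dsq_nonneg y i j).trans (hdη i j)) hη1
    (le_add_of_nonneg_right (dsq_nonneg y i j)) (add_le_add_right (hdη i j) 1)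
    (mul_inv_le_Znorm hdη) (Znorm_le y)

/-- With η = (diam{y_i})² < 1, for all i ≠ j,
|q_{ij}/(1 + ‖y_i − y_j‖²) − 1/(n(n-1))| ≤ 2η/(n(n-1)(1 − η)). -/
theorem qsim_concentration {n : ℕ} (hn : 2 ≤ n) (y : Fin n → Fin 2 → ℝ)
    (η : ℝ) (hη : η = ⨆ i, ⨆ j, dsq y i j) (hη1 : η < 1) :
    ∀ i j : Fin n, i ≠ j →
      |qsim y i j / (1 + dsq y i j) - ((n : ℝ) * ((n : ℝ) - 1))⁻¹|
        ≤ 2 * η / ((n : ℝ) * ((n : ℝ) - 1) * (1 - η)) :=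
  qsim_concentration_general y η hη hη1
end

section
/- Under the setting of the previous expectation formula with Δ = 0 and Σ having all eigenvalues λ_i satisfying C^{-1} ≤ λ_i ≤ C and τ² ≥ c·p for constants C, c > 0, the expected Gaussian kernel between two points from the same Gaussian component satisfies E[K_{ij}] = (Π_{i=1}^p (2λ_i/τ² + 1))^{-1/2}, and hence c' ≤ E[K_{ij}] ≤ 1 for a constant c' > 0 independent of p. -/
/-! With `z = X_i - X_j ~ N(0, 2Σ)` and `Σ = U diag(λ) Uᵀ`, the orthogonal substitution `z = U y`
preserves Lebesgue measure and `‖z‖²`, and turns `zᵀ Σ⁻¹ z` into `∑ yᵢ² / λᵢ`. The integrand then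
splits into a product of one-dimensional Gaussian integrals
`∫ exp(-x²/(2τ²)) · N(0, 2λ)(x) dx = (2λ/τ² + 1)^(-1/2)`.
The product `∏ (1 + 2λᵢ/τ²)` is at least `1`, and at most `exp (∑ 2λᵢ/τ²) ≤ exp (2pC/τ²) ≤ e^{2C/c}`,
so the expected kernel lies in `[e^{-C/c}, 1]`. -/

open Matrix MeasureTheory Real

variable {n : Type*} [Fintype n]

namespace Matrix

variable [DecidableEq n] {U S : Matrix n n ℝ} {lam : n → ℝ}

lemma dotProduct_mulVec_mulVec_of_transpose_mul_eq_one (hU : Uᵀ * U = 1) (v w : n → ℝ) :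
    U *ᵥ v ⬝ᵥ U *ᵥ w = v ⬝ᵥ w := by
  rw [dotProduct_mulVec, ← mulVec_transpose, mulVec_mulVec, hU, one_mulVec]

lemma abs_det_eq_one_of_mul_transpose_eq_one (hU : U * Uᵀ = 1) : |U.det| = 1 := by
  have h := congrArg det hU
  rw [det_mul, det_transpose, det_one, ← sq, ← sq_abs] at h
  exact (pow_eq_one_iff_of_nonneg (abs_nonneg _) two_ne_zero).1 h

lemma measurePreserving_mulVec_of_mul_transpose_eq_one (hU : U * Uᵀ = 1) :
    MeasurePreserving (U *ᵥ ·) (volume : Measure (n → ℝ)) volume := by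
  have hdet := abs_det_eq_one_of_mul_transpose_eq_one hU
  refine ⟨(toLin' U).continuous_of_finiteDimensional.measurable, ?_⟩
  have hlin : (U *ᵥ ·) = toLin' U := funext fun v => (toLin'_apply U v).symm
  rw [hlin, Real.map_matrix_volume_pi_eq_smul_volume_pi, abs_inv, hdet]
  · simp
  · exact abs_ne_zero.1 (hdet ▸ one_ne_zero)

lemma integral_comp_mulVec_of_mul_transpose_eq_one (hU : U * Uᵀ = 1) (f : (n → ℝ) → ℝ) :
    ∫ y, f (U *ᵥ y) = ∫ z, f z := by
  let e := (toLinearEquiv' U (invertibleOfRightInverse U Uᵀ hU)).toContinuousLinearEquiv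
  exact (measurePreserving_mulVec_of_mul_transpose_eq_one hU).integral_comp
    e.toHomeomorph.measurableEmbedding f

lemma det_eq_prod_of_eq_mul_diagonal_mul_transpose (hU : U * Uᵀ = 1)
    (hS : S = U * diagonal lam * Uᵀ) : S.det = ∏ i, lam i := by
  rw [hS, det_mul, det_mul, det_diagonal, mul_right_comm, ← det_mul, hU, det_one, one_mul]

lemma inv_eq_of_eq_mul_diagonal_mul_transpose (hU : U * Uᵀ = 1)
    (hS : S = U * diagonal lam * Uᵀ) (hlam : ∀ i, lam i ≠ 0) :
    S⁻¹ = U * diagonal lam⁻¹ * Uᵀ := by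
  have hdiag : diagonal lam * diagonal lam⁻¹ = 1 := by
    rw [diagonal_mul_diagonal, ← diagonal_one]
    exact congrArg diagonal (funext fun i => mul_inv_cancel₀ (hlam i))
  apply inv_eq_right_inv
  calc S * (U * diagonal lam⁻¹ * Uᵀ)
      = U * (diagonal lam * (Uᵀ * U) * diagonal lam⁻¹) * Uᵀ := by
        simp only [hS, Matrix.mul_assoc]
    _ = 1 := by rw [mul_eq_one_comm.1 hU, Matrix.mul_one, hdiag, Matrix.mul_one, hU]

lemma mulVec_dotProduct_inv_mulVec_mulVec (hU : U * Uᵀ = 1)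
    (hS : S = U * diagonal lam * Uᵀ) (hlam : ∀ i, lam i ≠ 0) (y : n → ℝ) :
    U *ᵥ y ⬝ᵥ S⁻¹ *ᵥ (U *ᵥ y) = ∑ i, y i ^ 2 / lam i := by
  have hUtU := mul_eq_one_comm.1 hU
  rw [inv_eq_of_eq_mul_diagonal_mul_transpose hU hS hlam, ← mulVec_mulVec, ← mulVec_mulVec,
    mulVec_mulVec (M := Uᵀ), hUtU, one_mulVec,
    dotProduct_mulVec_mulVec_of_transpose_mul_eq_one hUtU]
  simp only [dotProduct, mulVec_diagonal, Pi.inv_apply]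
  exact Finset.sum_congr rfl fun i _ => by ring

end Matrix

lemma integral_exp_neg_sq_div_mul_gaussian_density {l τ : ℝ} (hl : 0 < l) (hτ : τ ≠ 0) :
    ∫ x : ℝ, exp (-x ^ 2 / (2 * τ ^ 2)) * ((√(4 * π * l))⁻¹ * exp (-(x ^ 2 / l) / 4))
      = (√(2 * l / τ ^ 2 + 1))⁻¹ := by
  have hτ2 : 0 < τ ^ 2 := by positivity
  set b := (2 * τ ^ 2)⁻¹ + (4 * l)⁻¹ with hb
  have hexp (x : ℝ) : exp (-x ^ 2 / (2 * τ ^ 2)) * ((√(4 * π * l))⁻¹ * exp (-(x ^ 2 / l) / 4))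
      = (√(4 * π * l))⁻¹ * exp (-b * x ^ 2) := by
    rw [mul_left_comm, ← exp_add, hb]
    congr 2
    field_simp
    ring
  have hπb : π / b = 4 * π * l * (2 * l / τ ^ 2 + 1)⁻¹ := by
    rw [hb]
    field_simp
    ring
  simp_rw [hexp]
  rw [integral_const_mul, integral_gaussian, hπb, sqrt_mul' (4 * π * l) (by positivity), sqrt_inv,
    ← mul_assoc, inv_mul_cancel₀ (by positivity), one_mul]

section Integral

variable [DecidableEq n] {U S : Matrix n n ℝ} {lam : n → ℝ}

lemma sqrt_two_pi_pow_mul_det_two_smul_eq_prod (hU : U * Uᵀ = 1)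
    (hS : S = U * diagonal lam * Uᵀ) (hlam : ∀ i, 0 ≤ lam i) :
    √((2 * π) ^ Fintype.card n * ((2 : ℝ) • S).det) = ∏ i, √(4 * π * lam i) := by
  rw [det_smul, det_eq_prod_of_eq_mul_diagonal_mul_transpose hU hS, ← mul_assoc, ← mul_pow,
    ← Finset.card_univ, ← Finset.prod_const, ← Finset.prod_mul_distrib,
    sqrt_prod _ fun i _ => by have := hlam i; positivity]
  congr! 2 with i
  ring

theorem integral_gaussian_kernel_of_eq_mul_diagonal_mul_transpose {τ : ℝ} (hU : U * Uᵀ = 1)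
    (hS : S = U * diagonal lam * Uᵀ) (hlam : ∀ i, 0 < lam i) (hτ : τ ≠ 0) :
    ∫ z : n → ℝ, exp (-(∑ i, z i ^ 2) / (2 * τ ^ 2)) *
        ((√((2 * π) ^ Fintype.card n * ((2 : ℝ) • S).det))⁻¹ * exp (-(z ⬝ᵥ S⁻¹ *ᵥ z) / 4))
      = (√(∏ i, (2 * lam i / τ ^ 2 + 1)))⁻¹ := by
  let g (i : n) (x : ℝ) : ℝ :=
    exp (-x ^ 2 / (2 * τ ^ 2)) * ((√(4 * π * lam i))⁻¹ * exp (-(x ^ 2 / lam i) / 4))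
  have hfactor (y : n → ℝ) :
      exp (-(∑ i, (U *ᵥ y) i ^ 2) / (2 * τ ^ 2)) *
        ((√((2 * π) ^ Fintype.card n * ((2 : ℝ) • S).det))⁻¹ *
          exp (-(U *ᵥ y ⬝ᵥ S⁻¹ *ᵥ (U *ᵥ y)) / 4))
      = ∏ i, g i (y i) := by
    have hnorm : ∑ i, (U *ᵥ y) i ^ 2 = ∑ i, y i ^ 2 := by
      simpa only [dotProduct, sq] using
        dotProduct_mulVec_mulVec_of_transpose_mul_eq_one (mul_eq_one_comm.1 hU) y y
    rw [hnorm, mulVec_dotProduct_inv_mulVec_mulVec hU hS (fun i => (hlam i).ne'),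
      sqrt_two_pi_pow_mul_det_two_smul_eq_prod hU hS (fun i => (hlam i).le),
      ← Finset.prod_inv_distrib, Finset.prod_mul_distrib, Finset.prod_mul_distrib, ← exp_sum,
      ← exp_sum, ← Finset.sum_neg_distrib, ← Finset.sum_neg_distrib, Finset.sum_div,
      Finset.sum_div]
  rw [← integral_comp_mulVec_of_mul_transpose_eq_one hU]
  simp_rw [hfactor]
  rw [integral_fintype_prod_volume_eq_prod g, sqrt_prod _ fun i _ => by
    have := hlam i; positivity, ← Finset.prod_inv_distrib]
  exact Finset.prod_congr rfl fun i _ => integral_exp_neg_sq_div_mul_gaussian_density (hlam i) hτ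

end Integral

section Bounds

variable {lam : n → ℝ}

lemma one_le_prod_two_mul_div_sq_add_one (hlam : ∀ i, 0 ≤ lam i) (τ : ℝ) :
    1 ≤ ∏ i, (2 * lam i / τ ^ 2 + 1) :=
  Finset.one_le_prod fun i _ => le_add_of_nonneg_left (by have := hlam i; positivity)

lemma sum_two_mul_div_sq_le {C c τ : ℝ} (hlamC : ∀ i, lam i ≤ C) (hC : 0 ≤ C) (hc : 0 < c)
    (hτ : c * Fintype.card n ≤ τ ^ 2) :
    ∑ i, 2 * lam i / τ ^ 2 ≤ 2 * (C / c) := by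
  have hsumC : ∑ i, lam i ≤ Fintype.card n * C := by
    simpa using Finset.sum_le_sum fun i (_ : i ∈ Finset.univ) => hlamC i
  rw [← Finset.sum_div, ← Finset.mul_sum]
  rcases (sq_nonneg τ).eq_or_lt with hτ0 | hτ0
  · rw [← hτ0, div_zero]
    positivity
  rw [div_le_iff₀ hτ0]
  calc 2 * ∑ i, lam i ≤ 2 * (C / c) * (c * Fintype.card n) := by
        rw [show 2 * (C / c) * (c * Fintype.card n) = 2 * (Fintype.card n * C) by field_simp]
        linarith
    _ ≤ 2 * (C / c) * τ ^ 2 := by gcongr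

lemma prod_two_mul_div_sq_add_one_le_exp {C c τ : ℝ} (hlam : ∀ i, 0 ≤ lam i)
    (hlamC : ∀ i, lam i ≤ C) (hC : 0 ≤ C) (hc : 0 < c) (hτ : c * Fintype.card n ≤ τ ^ 2) :
    ∏ i, (2 * lam i / τ ^ 2 + 1) ≤ exp (2 * (C / c)) :=
  calc ∏ i, (2 * lam i / τ ^ 2 + 1)
      = ∏ i, (1 + 2 * lam i / τ ^ 2) := by simp only [add_comm]
    _ ≤ exp (∑ i, 2 * lam i / τ ^ 2) :=
        prod_one_add_le_exp_sum _ fun i => by have := hlam i; positivity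
    _ ≤ exp (2 * (C / c)) := exp_le_exp.2 (sum_two_mul_div_sq_le hlamC hC hc hτ)

end Bounds

/-- Within-cluster expected Gaussian kernel: with Δ = 0, covariance S with eigenvalues
λ_i ∈ [C⁻¹, C] and bandwidth τ² ≥ c·p, the expected kernel
E[K] = (Π_{i=1}^p (2λ_i/τ² + 1))^{-1/2}, and hence c' ≤ E[K] ≤ 1 for a constant
c' > 0 independent of the dimension p. -/
theorem expected_kernel_same_cluster_bounds (C c : ℝ) (hC : 0 < C) (hc : 0 < c) :
    ∃ c' : ℝ, 0 < c' ∧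
      ∀ (p : ℕ) (S U : Matrix (Fin p) (Fin p) ℝ) (lam : Fin p → ℝ) (τ : ℝ),
        S.PosDef → U * Uᵀ = 1 → S = U * Matrix.diagonal lam * Uᵀ →
        (∀ i, C⁻¹ ≤ lam i ∧ lam i ≤ C) → 0 < τ → c * p ≤ τ ^ 2 →
        ((∫ z : Fin p → ℝ,
              Real.exp (-(∑ i, z i ^ 2) / (2 * τ ^ 2)) *
                ((Real.sqrt ((2 * Real.pi) ^ p * ((2 : ℝ) • S).det))⁻¹ *
                  Real.exp (-(z ⬝ᵥ (S⁻¹).mulVec z) / 4)))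
            = (Real.sqrt (∏ i, (2 * lam i / τ ^ 2 + 1)))⁻¹) ∧
        c' ≤ (∫ z : Fin p → ℝ,
              Real.exp (-(∑ i, z i ^ 2) / (2 * τ ^ 2)) *
                ((Real.sqrt ((2 * Real.pi) ^ p * ((2 : ℝ) • S).det))⁻¹ *
                  Real.exp (-(z ⬝ᵥ (S⁻¹).mulVec z) / 4))) ∧
        (∫ z : Fin p → ℝ,
              Real.exp (-(∑ i, z i ^ 2) / (2 * τ ^ 2)) *
                ((Real.sqrt ((2 * Real.pi) ^ p * ((2 : ℝ) • S).det))⁻¹ *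
                  Real.exp (-(z ⬝ᵥ (S⁻¹).mulVec z) / 4))) ≤ 1 := by
  refine ⟨exp (-(C / c)), exp_pos _, fun p S U lam τ _ hU hS hlam hτ hτc => ?_⟩
  have hlam_pos (i : Fin p) : 0 < lam i := (inv_pos.2 hC).trans_le (hlam i).1
  have hI := integral_gaussian_kernel_of_eq_mul_diagonal_mul_transpose hU hS hlam_pos hτ.ne'
  rw [Fintype.card_fin] at hI
  rw [hI]
  have hP1 := one_le_prod_two_mul_div_sq_add_one (fun i => (hlam_pos i).le) τ
  have hPC := prod_two_mul_div_sq_add_one_le_exp (fun i => (hlam_pos i).le) (fun i => (hlam i).2)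
    hC.le hc (by rwa [Fintype.card_fin])
  refine ⟨rfl, ?_, inv_le_one_of_one_le₀ (one_le_sqrt.2 hP1)⟩
  calc exp (-(C / c)) = (√(exp (2 * (C / c))))⁻¹ := by
        rw [← exp_half, ← exp_neg]
        ring_nf
    _ ≤ (√(∏ i, (2 * lam i / τ ^ 2 + 1)))⁻¹ :=
        inv_anti₀ (sqrt_pos.2 (by linarith)) (sqrt_le_sqrt hPC)
end
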